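/- arXiv:1711.08340 — 2 statements merged into one kernel-verified Lean document; each statement's English description precedes it below -/
import Mathlib

section
/- For every integer M ≥ 2 and all 1 ≤ j, l ≤ M−1, the integral ∫_0^1 φ_j(κ_M(y)) φ_l(κ_M(y)) dy equals 1 if j = l and 0 otherwise, where φ_j(x) = √2 sin(jπx) and κ_M(y) = ⌊My⌋/M. -/
/-! The integrand is constant on each `[k/M, (k+1)/M)`, so the integral is the Riemann sum
`M⁻¹ ∑_{k<M} 2 sin(jπk/M) sin(lπk/M)`. Product-to-sum turns it into a difference of sums
`∑_{k<M} cos(nπk/M)` with `n = j ∓ l`. Telescoping against `2 sin(nπ/2M)` shows that such a sum is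
`(1 - (-1)^n)/2` as soon as `2M ∤ n`; since `j - l` and `j + l` have the same parity, the two sums
cancel unless `j = l`, where the first one is `M`. -/

open Real Finset MeasureTheory Set

lemma eqOn_comp_floor_Ioo {α : Type*} (g : ℤ → α) (k : ℤ) :
    EqOn (fun x : ℝ => g ⌊x⌋) (fun _ => g k) (Ioo k (k + 1)) := by
  intro x hx
  simp only [Int.floor_eq_iff.2 ⟨hx.1.le, hx.2⟩]

section FloorIntegral

variable {E : Type*} [NormedAddCommGroup E]

lemma intervalIntegrable_comp_floor (g : ℤ → E) (k : ℤ) :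
    IntervalIntegrable (fun x : ℝ => g ⌊x⌋) volume k (k + 1) := by
  refine (intervalIntegrable_congr_uIoo (g := fun _ => g k) ?_).2 intervalIntegrable_const
  rw [uIoo_of_le (by linarith)]
  exact eqOn_comp_floor_Ioo g k

lemma integral_comp_floor_intCast [NormedSpace ℝ E] [CompleteSpace E] (g : ℤ → E) (k : ℤ) :
    ∫ x in (k : ℝ)..k + 1, g ⌊x⌋ = g k := by
  rw [intervalIntegral.integral_congr_Ioo_of_le (by linarith) (eqOn_comp_floor_Ioo g k),
    intervalIntegral.integral_const, add_sub_cancel_left, one_smul]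

lemma integral_comp_floor_natCast [NormedSpace ℝ E] [CompleteSpace E] (g : ℤ → E) (n : ℕ) :
    ∫ x in (0 : ℝ)..n, g ⌊x⌋ = ∑ k ∈ range n, g k := by
  have h := intervalIntegral.sum_integral_adjacent_intervals (μ := volume) (a := Nat.cast)
    (f := fun x : ℝ => g ⌊x⌋) (n := n) fun k _ => by
      exact_mod_cast intervalIntegrable_comp_floor g k
  rw [Nat.cast_zero] at h
  rw [← h]
  refine sum_congr rfl fun k _ => ?_
  exact_mod_cast integral_comp_floor_intCast g k

lemma integral_comp_floor_mul_natCast [NormedSpace ℝ E] [CompleteSpace E] (g : ℤ → E) {M : ℕ}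
    (hM : M ≠ 0) :
    ∫ y in (0 : ℝ)..1, g ⌊(M : ℝ) * y⌋ = (M : ℝ)⁻¹ • ∑ k ∈ range M, g k := by
  rw [intervalIntegral.integral_comp_mul_left (fun x => g ⌊x⌋) (Nat.cast_ne_zero.2 hM),
    mul_zero, mul_one, integral_comp_floor_natCast]

end FloorIntegral

lemma two_mul_sin_half_mul_sum_range_cos (θ : ℝ) (n : ℕ) :
    2 * sin (θ / 2) * ∑ k ∈ range n, cos (k * θ) = sin ((n - 1 / 2) * θ) + sin (θ / 2) := by
  have telescope : ∀ k : ℕ, 2 * sin (θ / 2) * cos (k * θ) =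
      sin (((k + 1 : ℕ) - 1 / 2) * θ) - sin ((k - 1 / 2) * θ) := by
    intro k
    rw [sin_sub_sin]
    push_cast
    ring_nf
  rw [mul_sum, sum_congr rfl fun k _ => telescope k,
    sum_range_sub (fun k : ℕ => sin ((k - 1 / 2 : ℝ) * θ))]
  simp only [Nat.cast_zero, zero_sub, neg_mul, sin_neg, sub_neg_eq_add, one_div, inv_mul_eq_div]

lemma sum_range_cos_int_mul_pi_div {M : ℕ} (hM : M ≠ 0) {n : ℤ} (hn : ¬ (2 * M : ℤ) ∣ n) :
    ∑ k ∈ range M, cos (k * (n * π / M)) = (1 - (-1) ^ n) / 2 := by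
  have hM' : (M : ℝ) ≠ 0 := Nat.cast_ne_zero.2 hM
  have hsin : sin (n * π / M / 2) ≠ 0 := by
    rw [Ne, sin_eq_zero_iff]
    rintro ⟨m, hm⟩
    refine hn ⟨m, ?_⟩
    have : (n : ℝ) = 2 * M * m := by
      field_simp at hm
      linarith
    exact_mod_cast this
  have key := two_mul_sin_half_mul_sum_range_cos (n * π / M) M
  have hend : ((M : ℝ) - 1 / 2) * (n * π / M) = n * π - n * π / M / 2 := by
    field_simp
  rw [hend, sin_int_mul_pi_sub] at key
  apply mul_left_cancel₀ (mul_ne_zero two_ne_zero hsin)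
  linear_combination key

lemma sum_range_two_mul_sin_mul_sin {M j l : ℕ} (hj : 0 < j) (hjM : j < M) (hl : 0 < l)
    (hlM : l < M) :
    ∑ k ∈ range M, 2 * sin (j * π * (k / M)) * sin (l * π * (k / M)) =
      if j = l then (M : ℝ) else 0 := by
  have hM : M ≠ 0 := by omega
  have product_to_sum : ∀ k : ℕ, 2 * sin (j * π * (k / M)) * sin (l * π * (k / M)) =
      cos (k * (((j - l : ℤ) : ℝ) * π / M)) - cos (k * (((j + l : ℤ) : ℝ) * π / M)) := by
    intro k
    rw [two_mul_sin_mul_sin]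
    push_cast
    ring_nf
  have hsum : ¬ (2 * M : ℤ) ∣ (j + l : ℤ) := fun h => by
    have := Int.eq_zero_of_abs_lt_dvd h (abs_lt.2 ⟨by omega, by omega⟩)
    omega
  rw [sum_congr rfl fun k _ => product_to_sum k, sum_sub_distrib,
    sum_range_cos_int_mul_pi_div hM hsum]
  split_ifs with hjl
  · subst hjl
    simp [Even.neg_one_zpow ⟨(j : ℤ), rfl⟩]
  · have hdiff : ¬ (2 * M : ℤ) ∣ (j - l : ℤ) := fun h => by
      have := Int.eq_zero_of_abs_lt_dvd h (abs_lt.2 ⟨by omega, by omega⟩)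
      omega
    have hparity : (-1 : ℝ) ^ (j + l : ℤ) = (-1) ^ (j - l : ℤ) := by
      rw [show (j + l : ℤ) = (j - l) + 2 * l by ring, zpow_add₀ (by norm_num),
        (even_two_mul (l : ℤ)).neg_one_zpow, mul_one]
    rw [sum_range_cos_int_mul_pi_div hM hdiff, hparity, sub_self]

theorem discretized_sine_orthonormal_general (M : ℕ) (j l : ℕ)
    (hj1 : 1 ≤ j) (hj2 : j ≤ M - 1) (hl1 : 1 ≤ l) (hl2 : l ≤ M - 1) :
    (∫ y in (0:ℝ)..1,
        (Real.sqrt 2 * Real.sin (j * π * ((⌊(M : ℝ) * y⌋ : ℝ) / M))) *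
          (Real.sqrt 2 * Real.sin (l * π * ((⌊(M : ℝ) * y⌋ : ℝ) / M)))) =
      if j = l then 1 else 0 := by
  have hM0 : M ≠ 0 := by omega
  rw [integral_comp_floor_mul_natCast
    (fun k : ℤ => √2 * sin (j * π * (k / M)) * (√2 * sin (l * π * (k / M)))) hM0]
  have sqrt_two_sq : ∀ x y : ℝ, √2 * x * (√2 * y) = 2 * x * y := fun x y => by
    linear_combination (x * y) * Real.mul_self_sqrt (zero_le_two (α := ℝ))
  simp only [Int.cast_natCast, sqrt_two_sq, smul_eq_mul]
  rw [sum_range_two_mul_sin_mul_sin (by omega) (by omega) (by omega) (by omega)]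
  split_ifs
  · exact inv_mul_cancel₀ (Nat.cast_ne_zero.2 hM0)
  · exact mul_zero _

theorem discretized_sine_orthonormal (M : ℕ) (hM : 2 ≤ M) (j l : ℕ)
    (hj1 : 1 ≤ j) (hj2 : j ≤ M - 1) (hl1 : 1 ≤ l) (hl2 : l ≤ M - 1) :
    (∫ y in (0:ℝ)..1,
        (Real.sqrt 2 * Real.sin (j * π * ((⌊(M : ℝ) * y⌋ : ℝ) / M))) *
          (Real.sqrt 2 * Real.sin (l * π * ((⌊(M : ℝ) * y⌋ : ℝ) / M)))) =
      if j = l then 1 else 0 :=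
  discretized_sine_orthonormal_general M j l hj1 hj2 hl1 hl2
end

section
/- For every α ∈ (1/2, 5/2) there exists a constant C = C(α, T) such that for all M ≥ 2, all x ∈ [0,1], and all 0 < s < t ≤ T, Σ_{j=1}^{M−1} exp(−2 j² π² c_j^M s) (1 − exp(−j² π² c_j^M (t−s)))² ≤ C s^{−α} (t−s)^{α − 1/2}, where c_j^M = sin²(jπ/(2M))/(jπ/(2M))² ∈ [4/π², 1]. -/
open Real

/-- The correction factor in the eigenvalues of the discrete Dirichlet Laplacian. -/
noncomputable def cjM (j M : ℕ) : ℝ :=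
  Real.sin (j * π / (2 * M)) ^ 2 / (j * π / (2 * M)) ^ 2

/-!
With `λ = j² π² c_j^M ∈ [4 j², π² j²]`, the bounds `exp (-x) ≤ 3! x^(-α)` and
`(1 - exp (-y))² ≤ min 1 y²` reduce each term to a multiple of
`s^(-α) j^(-2α) min 1 (j⁴ (t-s)²)`. That series is split at `N = ⌊(t-s)^(-1/2)⌋`, where
`j² (t-s)` crosses `1`: below `N` it is `(t-s)² ∑ j^(4-2α) ≲ (t-s)² N^(5-2α)`, above `N` it is
`∑ j^(-2α) ≲ N^(1-2α)`, both comparable to `(t-s)^(α-1/2)` by comparing with `∫ x^q dx`.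
-/

open Finset
open scoped Nat

lemma exp_neg_le_factorial_mul_rpow_neg {α x : ℝ} {n : ℕ} (hα : 0 ≤ α) (hαn : α ≤ n)
    (hx : 0 < x) : exp (-x) ≤ n ! * x ^ (-α) := by
  have hn : (1 : ℝ) ≤ n ! := by exact_mod_cast n.factorial_pos
  have key : x ^ α ≤ n ! * exp x := by
    rcases le_total x 1 with hx1 | hx1
    · calc x ^ α ≤ 1 := rpow_le_one hx.le hx1 hα
        _ ≤ n ! * exp x := one_le_mul_of_one_le_of_one_le hn (one_le_exp hx.le)
    · calc x ^ α ≤ x ^ (n : ℝ) := rpow_le_rpow_of_exponent_le hx1 hαn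
        _ = x ^ n := rpow_natCast x n
        _ ≤ n ! * exp x := by
          rw [← div_le_iff₀' (by positivity)]; exact pow_div_factorial_le_exp x hx.le n
  rw [rpow_neg hx.le, exp_neg, ← div_eq_mul_inv, le_div_iff₀ (by positivity),
    inv_mul_le_iff₀ (exp_pos x)]
  linarith

lemma one_sub_exp_neg_sq_le_min {y : ℝ} (hy : 0 ≤ y) : (1 - exp (-y)) ^ 2 ≤ min 1 (y ^ 2) := by
  have h0 : 0 ≤ 1 - exp (-y) := sub_nonneg.mpr (exp_le_one_iff.mpr (neg_nonpos.mpr hy))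
  have h1 : 1 - exp (-y) ≤ 1 := sub_le_self _ (exp_pos _).le
  have hy' : 1 - exp (-y) ≤ y := by linarith [add_one_le_exp (-y)]
  exact le_min (pow_le_one₀ h0 h1) (pow_le_pow_left₀ h0 hy' 2)

lemma sin_sq_div_sq_mem_Icc {θ : ℝ} (hθ : 0 < θ) (hθπ : θ ≤ π / 2) :
    sin θ ^ 2 / θ ^ 2 ∈ Set.Icc (4 / π ^ 2) 1 := by
  have hlow : 2 / π * θ ≤ sin θ := mul_le_sin hθ.le hθπ
  constructor
  · rw [le_div_iff₀ (by positivity)]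
    calc 4 / π ^ 2 * θ ^ 2 = (2 / π * θ) ^ 2 := by ring
      _ ≤ sin θ ^ 2 := by gcongr
  · rw [div_le_one (by positivity)]
    gcongr
    · exact (by positivity : 0 ≤ 2 / π * θ).trans hlow
    · exact sin_le hθ.le

lemma cjM_mem_Icc {j M : ℕ} (hj : 0 < j) (hjM : j ≤ M) : cjM j M ∈ Set.Icc (4 / π ^ 2) 1 := by
  have hM : (0 : ℝ) < M := by exact_mod_cast hj.trans_le hjM
  apply sin_sq_div_sq_mem_Icc (by positivity)
  rw [div_le_div_iff₀ (by positivity) two_pos]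
  have : (j : ℝ) ≤ M := by exact_mod_cast hjM
  nlinarith [pi_pos]

lemma exp_neg_two_mul_mul_one_sub_exp_neg_sq_le {α : ℝ} (hα0 : 0 ≤ α) (hα3 : α ≤ 3)
    {j lam s τ : ℝ} (hj : 0 < j) (hlow : 4 * j ^ 2 ≤ lam) (hup : lam ≤ π ^ 2 * j ^ 2)
    (hs : 0 < s) (hτ : 0 ≤ τ) :
    exp (-2 * lam * s) * (1 - exp (-lam * τ)) ^ 2 ≤
      6 * 8 ^ (-α) * π ^ 4 * s ^ (-α) * (j ^ (-(2 * α)) * min 1 ((j ^ 2 * τ) ^ 2)) := by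
  have hexp : exp (-2 * lam * s) ≤ 6 * 8 ^ (-α) * s ^ (-α) * j ^ (-(2 * α)) :=
    calc exp (-2 * lam * s) ≤ exp (-(8 * j ^ 2 * s)) := by gcongr; nlinarith
      _ ≤ (3 ! : ℝ) * (8 * j ^ 2 * s) ^ (-α) :=
        exp_neg_le_factorial_mul_rpow_neg hα0 (by norm_num; linarith) (by positivity)
      _ = 6 * 8 ^ (-α) * s ^ (-α) * j ^ (-(2 * α)) := by
        rw [mul_rpow (by positivity) hs.le, mul_rpow (by norm_num) (by positivity),
          ← rpow_natCast, ← rpow_mul hj.le]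
        norm_num [Nat.factorial]
        ring
  have hsq : (1 - exp (-lam * τ)) ^ 2 ≤ π ^ 4 * min 1 ((j ^ 2 * τ) ^ 2) :=
    calc (1 - exp (-lam * τ)) ^ 2 ≤ min 1 ((lam * τ) ^ 2) := by
          rw [neg_mul]; exact one_sub_exp_neg_sq_le_min (by nlinarith)
      _ ≤ min (π ^ 4) (π ^ 4 * (j ^ 2 * τ) ^ 2) := by
          refine min_le_min (one_le_pow₀ (by linarith [pi_gt_three])) ?_
          rw [show π ^ 4 * (j ^ 2 * τ) ^ 2 = (π ^ 2 * j ^ 2 * τ) ^ 2 by ring]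
          gcongr
          nlinarith
      _ = π ^ 4 * min 1 ((j ^ 2 * τ) ^ 2) := by
          rw [mul_min_of_nonneg _ _ (by positivity), mul_one]
  calc _ ≤ (6 * 8 ^ (-α) * s ^ (-α) * j ^ (-(2 * α))) * (π ^ 4 * min 1 ((j ^ 2 * τ) ^ 2)) :=
        mul_le_mul hexp hsq (sq_nonneg _) (by positivity)
    _ = _ := by ring

lemma sum_Ioc_rpow_le {q : ℝ} (hq : q ≤ 0) (hq1 : q ≠ -1) {a b : ℕ} (ha : 0 < a) (hab : a ≤ b) :
    ∑ j ∈ Ioc a b, (j : ℝ) ^ q ≤ ((b : ℝ) ^ (q + 1) - (a : ℝ) ^ (q + 1)) / (q + 1) := by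
  have hanti : AntitoneOn (fun x : ℝ => x ^ q) (Set.Icc a b) :=
    (antitoneOn_rpow_Ioi_of_exponent_nonpos hq).mono fun x hx =>
      lt_of_lt_of_le (by exact_mod_cast ha) hx.1
  have h0 : (0 : ℝ) ∉ Set.uIcc (a : ℝ) b := by
    rw [Set.uIcc_of_le (by exact_mod_cast hab)]
    exact fun h => (Nat.cast_pos.mpr ha).not_ge h.1
  calc ∑ j ∈ Ioc a b, (j : ℝ) ^ q = ∑ i ∈ Ico a b, ((i + 1 : ℕ) : ℝ) ^ q := by
        rw [sum_Ico_add' (fun j : ℕ => (j : ℝ) ^ q), Ico_add_one_add_one_eq_Ioc]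
    _ ≤ ∫ x in (a : ℝ)..b, x ^ q := hanti.sum_le_integral_Ico hab
    _ = _ := integral_rpow (Or.inr ⟨hq1, h0⟩)

lemma sum_Ioc_rpow_neg_le {p : ℝ} (hp : 1 < p) (N m : ℕ) :
    ∑ j ∈ Ioc N m, (j : ℝ) ^ (-p) ≤ p / (p - 1) * ((N : ℝ) + 1) ^ (1 - p) := by
  have hp1 : 0 < p - 1 := by linarith
  rcases le_or_gt m N with hmN | hNm
  · rw [Ioc_eq_empty_of_le hmN, sum_empty]
    positivity
  have hhead : ((N + 1 : ℕ) : ℝ) ^ (-p) ≤ ((N : ℝ) + 1) ^ (1 - p) := by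
    push_cast
    exact rpow_le_rpow_of_exponent_le (by linarith [N.cast_nonneg (α := ℝ)]) (by linarith)
  have htail : ∑ j ∈ Ioc (N + 1) m, (j : ℝ) ^ (-p) ≤ ((N : ℝ) + 1) ^ (1 - p) / (p - 1) := by
    have h := sum_Ioc_rpow_le (q := -p) (by linarith) (by linarith) N.succ_pos hNm
    rw [show -p + 1 = -(p - 1) by ring, div_neg, ← neg_div, neg_sub,
      show -(p - 1) = 1 - p by ring] at h
    push_cast at h
    exact h.trans (by gcongr; exact sub_le_self _ (by positivity))
  rw [← sum_Ioc_consecutive _ (Nat.le_succ N) hNm, Nat.Ioc_succ_singleton, sum_singleton]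
  calc _ ≤ ((N : ℝ) + 1) ^ (1 - p) + ((N : ℝ) + 1) ^ (1 - p) / (p - 1) := add_le_add hhead htail
    _ = _ := by field_simp; ring

lemma sum_Icc_rpow_le {q : ℝ} (hq : -1 < q) (N : ℕ) :
    ∑ j ∈ Icc 1 N, (j : ℝ) ^ q ≤ (1 + (q + 1)⁻¹) * (N : ℝ) ^ (q + 1) := by
  have hq1 : 0 < q + 1 := by linarith
  have hNq : (N : ℝ) ^ (q + 1) = N * (N : ℝ) ^ q := by
    rw [rpow_add_one' N.cast_nonneg hq1.ne', mul_comm]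
  rcases le_or_gt 0 q with hq0 | hq0
  · calc ∑ j ∈ Icc 1 N, (j : ℝ) ^ q ≤ ∑ _j ∈ Icc 1 N, (N : ℝ) ^ q :=
          sum_le_sum fun j hj => rpow_le_rpow j.cast_nonneg
            (by exact_mod_cast (mem_Icc.mp hj).2) hq0
      _ = (N : ℝ) ^ (q + 1) := by simp [hNq]
      _ ≤ _ := by rw [add_mul, one_mul]; exact le_add_of_nonneg_right (by positivity)
  rcases N.eq_zero_or_pos with rfl | hN
  · simp [zero_rpow hq1.ne']
  have h := sum_Ioc_rpow_le hq0.le (by linarith) one_pos hN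
  have hN1 : 1 ≤ (N : ℝ) ^ (q + 1) := one_le_rpow (by exact_mod_cast hN) hq1.le
  rw [Icc_eq_cons_Ioc hN, sum_cons, Nat.cast_one, one_rpow]
  rw [Nat.cast_one, one_rpow] at h
  calc 1 + ∑ j ∈ Ioc 1 N, (j : ℝ) ^ q ≤ 1 + ((N : ℝ) ^ (q + 1) - 1) / (q + 1) := by linarith
    _ ≤ _ := by
      rw [add_mul, one_mul, sub_div, inv_mul_eq_div]
      linarith [div_pos one_pos hq1]

lemma sum_rpow_neg_mul_min_one_sq_le {α : ℝ} (hα1 : 1 / 2 < α) (hα2 : α < 5 / 2) :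
    ∃ C > 0, ∀ τ : ℝ, 0 < τ → ∀ m : ℕ,
      ∑ j ∈ Icc 1 m, (j : ℝ) ^ (-(2 * α)) * min 1 (((j : ℝ) ^ 2 * τ) ^ 2) ≤ C * τ ^ (α - 1 / 2) := by
  have hp : 1 < 2 * α := by linarith
  have hq : -1 < 4 - 2 * α := by linarith
  refine ⟨(1 + (5 - 2 * α)⁻¹) + 2 * α / (2 * α - 1), by
    have : 0 < 5 - 2 * α := by linarith
    have : 0 < 2 * α - 1 := by linarith
    positivity, fun τ hτ m => ?_⟩
  set f : ℕ → ℝ := fun j => (j : ℝ) ^ (-(2 * α)) * min 1 (((j : ℝ) ^ 2 * τ) ^ 2)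
  have hf0 : ∀ j, 0 ≤ f j := fun j => by positivity
  set x := τ ^ (-(1 / 2) : ℝ) with hx
  set N := ⌊x⌋₊
  have hx0 : 0 < x := by positivity
  have hNx : (N : ℝ) ≤ x := Nat.floor_le hx0.le
  have hxN : x < N + 1 := Nat.lt_floor_add_one x
  have hhead : ∑ j ∈ Icc 1 N, f j ≤ (1 + (5 - 2 * α)⁻¹) * τ ^ (α - 1 / 2) := by
    have hterm : ∀ j ∈ Icc 1 N, f j ≤ τ ^ 2 * (j : ℝ) ^ (4 - 2 * α) := by
      intro j hj
      have hj0 : (0 : ℝ) < j := by exact_mod_cast (mem_Icc.mp hj).1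
      calc f j ≤ (j : ℝ) ^ (-(2 * α)) * ((j : ℝ) ^ 2 * τ) ^ 2 :=
            mul_le_mul_of_nonneg_left (min_le_right _ _) (by positivity)
        _ = τ ^ 2 * (j : ℝ) ^ (4 - 2 * α) := by
          rw [sub_eq_neg_add, rpow_add hj0, show (4 : ℝ) = (4 : ℕ) by norm_num, rpow_natCast]
          ring
    have hsum := sum_Icc_rpow_le hq N
    rw [show 4 - 2 * α + 1 = 5 - 2 * α by ring] at hsum
    have hscale : τ ^ 2 * x ^ (5 - 2 * α) = τ ^ (α - 1 / 2) := by
      rw [hx, ← rpow_mul hτ.le, ← rpow_natCast, ← rpow_add hτ]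
      ring_nf
    calc ∑ j ∈ Icc 1 N, f j ≤ τ ^ 2 * ∑ j ∈ Icc 1 N, (j : ℝ) ^ (4 - 2 * α) := by
          rw [mul_sum]; exact sum_le_sum hterm
      _ ≤ τ ^ 2 * ((1 + (5 - 2 * α)⁻¹) * x ^ (5 - 2 * α)) := by
          have : 0 < 5 - 2 * α := by linarith
          gcongr
          exact hsum.trans (by gcongr)
      _ = _ := by rw [← hscale]; ring
  have htail : ∑ j ∈ Ioc N m, f j ≤ 2 * α / (2 * α - 1) * τ ^ (α - 1 / 2) := by
    have hscale : x ^ (1 - 2 * α) = τ ^ (α - 1 / 2) := by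
      rw [hx, ← rpow_mul hτ.le]
      ring_nf
    calc ∑ j ∈ Ioc N m, f j ≤ ∑ j ∈ Ioc N m, (j : ℝ) ^ (-(2 * α)) :=
          sum_le_sum fun j _ => mul_le_of_le_one_right (by positivity) (min_le_left _ _)
      _ ≤ 2 * α / (2 * α - 1) * ((N : ℝ) + 1) ^ (1 - 2 * α) := sum_Ioc_rpow_neg_le hp N m
      _ ≤ 2 * α / (2 * α - 1) * x ^ (1 - 2 * α) := by
          have : 0 < 2 * α - 1 := by linarith
          exact mul_le_mul_of_nonneg_left (rpow_le_rpow_of_nonpos hx0 hxN.le (by linarith))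
            (by positivity)
      _ = _ := by rw [hscale]
  have hcover : Icc 1 m ⊆ Icc 1 N ∪ Ioc N m := by
    intro j; simp only [mem_union, mem_Icc, mem_Ioc]; omega
  have hdisj : Disjoint (Icc 1 N) (Ioc N m) := by
    rw [disjoint_left]; intro j; simp only [mem_Icc, mem_Ioc]; omega
  calc ∑ j ∈ Icc 1 m, f j ≤ ∑ j ∈ Icc 1 N ∪ Ioc N m, f j :=
        sum_le_sum_of_subset_of_nonneg hcover fun j _ _ => hf0 j
    _ = ∑ j ∈ Icc 1 N, f j + ∑ j ∈ Ioc N m, f j := sum_union hdisj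
    _ ≤ _ := by linarith

lemma exp_cjM_mul_one_sub_exp_cjM_sq_le {α : ℝ} (hα0 : 0 ≤ α) (hα3 : α ≤ 3) {j M : ℕ}
    (hj : 0 < j) (hjM : j ≤ M) {s τ : ℝ} (hs : 0 < s) (hτ : 0 ≤ τ) :
    exp (-2 * (j : ℝ) ^ 2 * π ^ 2 * cjM j M * s) *
        (1 - exp (-(j : ℝ) ^ 2 * π ^ 2 * cjM j M * τ)) ^ 2 ≤
      6 * 8 ^ (-α) * π ^ 4 * s ^ (-α) *
        ((j : ℝ) ^ (-(2 * α)) * min 1 (((j : ℝ) ^ 2 * τ) ^ 2)) := by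
  obtain ⟨hc4, hc1⟩ := cjM_mem_Icc hj hjM
  rw [div_le_iff₀' (by positivity)] at hc4
  have hj2 : (0 : ℝ) ≤ (j : ℝ) ^ 2 := sq_nonneg _
  have h := exp_neg_two_mul_mul_one_sub_exp_neg_sq_le (α := α) hα0 hα3
    (j := j) (lam := (j : ℝ) ^ 2 * π ^ 2 * cjM j M) (by exact_mod_cast hj)
    (by nlinarith) (by nlinarith [mul_nonneg hj2 (sq_nonneg π)]) hs hτ
  convert h using 4 <;> ring_nf

theorem discrete_kernel_time_increment_general (α T : ℝ) (hα1 : 1 / 2 < α) (hα2 : α < 5 / 2) :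
    ∃ C > 0, ∀ M : ℕ, 2 ≤ M → ∀ x : ℝ, x ∈ Set.Icc (0:ℝ) 1 → ∀ s t : ℝ,
      0 < s → s < t → t ≤ T →
      ∑ j ∈ Finset.Icc 1 (M - 1),
          Real.exp (-2 * (j : ℝ) ^ 2 * π ^ 2 * cjM j M * s) *
            (1 - Real.exp (-(j : ℝ) ^ 2 * π ^ 2 * cjM j M * (t - s))) ^ 2 ≤
        C * s ^ (-α) * (t - s) ^ (α - 1 / 2) := by
  obtain ⟨C, hC, hsum⟩ := sum_rpow_neg_mul_min_one_sq_le hα1 hα2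
  refine ⟨6 * 8 ^ (-α) * π ^ 4 * C, by positivity, fun M _ x _ s t hs hst _ => ?_⟩
  have hτ : 0 < t - s := sub_pos.mpr hst
  calc _ ≤ ∑ j ∈ Icc 1 (M - 1), 6 * 8 ^ (-α) * π ^ 4 * s ^ (-α) *
          ((j : ℝ) ^ (-(2 * α)) * min 1 (((j : ℝ) ^ 2 * (t - s)) ^ 2)) :=
        sum_le_sum fun j hj => exp_cjM_mul_one_sub_exp_cjM_sq_le (by linarith) (by linarith)
          (mem_Icc.mp hj).1 ((mem_Icc.mp hj).2.trans (M.sub_le 1)) hs hτ.le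
    _ ≤ 6 * 8 ^ (-α) * π ^ 4 * s ^ (-α) * (C * (t - s) ^ (α - 1 / 2)) := by
        rw [← mul_sum]; gcongr; exact hsum _ hτ _
    _ = _ := by ring

theorem discrete_kernel_time_increment (α T : ℝ) (hα1 : 1 / 2 < α) (hα2 : α < 5 / 2)
    (hT : 0 < T) :
    ∃ C > 0, ∀ M : ℕ, 2 ≤ M → ∀ x : ℝ, x ∈ Set.Icc (0:ℝ) 1 → ∀ s t : ℝ,
      0 < s → s < t → t ≤ T →
      ∑ j ∈ Finset.Icc 1 (M - 1),
          Real.exp (-2 * (j : ℝ) ^ 2 * π ^ 2 * cjM j M * s) *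
            (1 - Real.exp (-(j : ℝ) ^ 2 * π ^ 2 * cjM j M * (t - s))) ^ 2 ≤
        C * s ^ (-α) * (t - s) ^ (α - 1 / 2) :=
  discrete_kernel_time_increment_general α T hα1 hα2
end
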